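/- Let m be a measure on projections of N = M₂(M), let π ∈ M be a projection, v ∈ M a unitary, and x ∈ M with 0 ≤ x ≤ π and rp(x(π−x)) = π. Then m(p(x,v,π)) + m(p(π−x,−v,π)) = m(π⊕π). -/

import Mathlib

set_option synthInstance.maxHeartbeats 1000000
set_option maxHeartbeats 1000000

open Filter

/-!
Statement 11: If `m` is a measure on projections of `N = M₂(M)` (`M` a commutative
von Neumann algebra), `π` a projection of `M`, `v` a unitary of `M`, `0 ≤ x ≤ π`
with `rp(x(π−x)) = π`, then `m(p(x,v,π)) + m(p(π−x,−v,π)) = m(π⊕π)`.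
-/

universe u

variable {H : Type u} [NormedAddCommGroup H] [InnerProductSpace ℂ H] [CompleteSpace H]

/-- `p` is an orthogonal projection belonging to the von Neumann algebra `M`. -/
def VonNeumannAlgebra.IsProjectionIn (M : VonNeumannAlgebra H) (p : H →L[ℂ] H) : Prop :=
  p ∈ M ∧ p * p = p ∧ star p = p

/-- `v` is a unitary element of the von Neumann algebra `M`. -/
def VonNeumannAlgebra.IsUnitaryIn (M : VonNeumannAlgebra H) (v : H →L[ℂ] H) : Prop :=
  v ∈ M ∧ star v * v = 1 ∧ v * star v = 1

/-- `q` is the range projection of `a` in `M`: the least projection of `M`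
(with respect to the Loewner order) satisfying `q * a = a`. -/
def VonNeumannAlgebra.IsRangeProjectionOf (M : VonNeumannAlgebra H) (q a : H →L[ℂ] H) : Prop :=
  M.IsProjectionIn q ∧ q * a = a ∧
    ∀ q', M.IsProjectionIn q' → q' * a = a → q ≤ q'

/-- The matrix `p(x,v,π)`. -/
noncomputable def pMat (x v π : H →L[ℂ] H) : Matrix (Fin 2) (Fin 2) (H →L[ℂ] H) :=
  !![x, v * CFC.sqrt (x * (π - x));
     star v * CFC.sqrt (x * (π - x)), π - x]

/-- The diagonal matrix `π₁ ⊕ π₂ = diag(π₁, π₂)`. -/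
def diagMat (π₁ π₂ : H →L[ℂ] H) : Matrix (Fin 2) (Fin 2) (H →L[ℂ] H) :=
  !![π₁, 0; 0, π₂]

/-- `p` is a projection of `N = M₂(M)`: a self-adjoint idempotent matrix with
entries in `M`. -/
def IsProjectionInN (M : VonNeumannAlgebra H)
    (p : Matrix (Fin 2) (Fin 2) (H →L[ℂ] H)) : Prop :=
  (∀ i j, p i j ∈ M) ∧ p * p = p ∧ star p = p

/-- `m` is a (completely additive) measure on the projections of `N = M₂(M)`;
convergence of the net of finite partial sums is entrywise in the weak operator
topology. -/
def IsMeasureOnProjectionsN (M : VonNeumannAlgebra H)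
    (m : Matrix (Fin 2) (Fin 2) (H →L[ℂ] H) → ℝ) : Prop :=
  (∀ p, IsProjectionInN M p → 0 ≤ m p) ∧
  ∀ {I : Type u} (p : I → Matrix (Fin 2) (Fin 2) (H →L[ℂ] H))
    (q : Matrix (Fin 2) (Fin 2) (H →L[ℂ] H)),
    (∀ i, IsProjectionInN M (p i)) → IsProjectionInN M q →
    (∀ i j, i ≠ j → p i * p j = 0) →
    (∀ a b : Fin 2,
      Tendsto (fun s : Finset I => ContinuousLinearMapWOT.ofCLM ((∑ i ∈ s, p i) a b))
        atTop (nhds (ContinuousLinearMapWOT.ofCLM (q a b)))) →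
    HasSum (fun i => m (p i)) (m q)


lemma isClosed_centralizer' (s : Set (H →L[ℂ] H)) : IsClosed (Set.centralizer s) := by
  have h : Set.centralizer s = ⋂ m ∈ s, {c : H →L[ℂ] H | m * c = c * m} := by
    ext c; simp [Set.mem_centralizer_iff]
  rw [h]
  exact isClosed_biInter fun m _ => isClosed_eq (continuous_mul_left m) (continuous_mul_right m)

lemma VonNeumannAlgebra.isClosed_coe' (M : VonNeumannAlgebra H) :
    IsClosed (M : Set (H →L[ℂ] H)) := by
  rw [← M.centralizer_centralizer]
  exact isClosed_centralizer' _

lemma cfc_complex_mem' (M : VonNeumannAlgebra H) {a : H →L[ℂ] H} (haM : a ∈ M)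
    [IsStarNormal a] (g : ℂ → ℂ) : cfc g a ∈ M := by
  by_cases hg : ContinuousOn g (spectrum ℂ a)
  · have hmem : cfc g a ∈ StarAlgebra.elemental ℂ a := by
      rw [cfc_apply g a ‹IsStarNormal a› hg, cfcHom_eq_of_isStarNormal]
      exact Subtype.coe_prop _
    exact StarAlgebra.elemental.le_of_mem (S := M.toStarSubalgebra) M.isClosed_coe' haM hmem
  · rw [cfc_apply_of_not_continuousOn a hg]; exact zero_mem _

lemma sqrt_mem' (M : VonNeumannAlgebra H) {a : H →L[ℂ] H} (haM : a ∈ M) (ha : 0 ≤ a)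
    (key : ∀ g : ℂ → ℂ, cfc g a ∈ M) : CFC.sqrt a ∈ M := by
  have hsa : IsSelfAdjoint a := .of_nonneg ha
  have h1 : CFC.sqrt a = cfcₙ (fun y : ℝ => ((Real.toNNReal y).sqrt : ℝ)) a := by
    rw [CFC.sqrt]
    exact cfcₙ_nnreal_eq_real _ _ ha
  have h2 : CFC.sqrt a = cfcₙ (fun z : ℂ => (((Real.toNNReal z.re).sqrt : ℝ) : ℂ)) a := by
    rw [h1]; exact cfcₙ_real_eq_complex _ hsa
  have h3 : CFC.sqrt a = cfc (fun z : ℂ => (((Real.toNNReal z.re).sqrt : ℝ) : ℂ)) a := by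
    rw [h2]
    exact cfcₙ_eq_cfc (Continuous.continuousOn (by
      exact Complex.continuous_ofReal.comp <| NNReal.continuous_coe.comp <|
        NNReal.continuous_sqrt.comp continuous_real_toNNReal |>.comp Complex.continuous_re))
      (by simp)
  rw [h3]; exact key _

lemma ulift_fin_two_sum {α : Type*} [AddCommMonoid α] (f : ULift.{u} (Fin 2) → α) :
    ∑ i, f i = f ⟨0⟩ + f ⟨1⟩ := by
  rw [← Equiv.sum_comp (Equiv.ulift (α := Fin 2)).symm f, Fin.sum_univ_two]
  rfl

theorem measure_pMat_add_measure_pMat_compl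
    (M : VonNeumannAlgebra H)
    (hcomm : ∀ a ∈ M, ∀ b ∈ M, a * b = b * a)
    (m : Matrix (Fin 2) (Fin 2) (H →L[ℂ] H) → ℝ)
    (hm : IsMeasureOnProjectionsN M m)
    (π v x : H →L[ℂ] H)
    (hπ : M.IsProjectionIn π) (hv : M.IsUnitaryIn v)
    (hxM : x ∈ M) (hx0 : 0 ≤ x) (hxπ : x ≤ π)
    (hrp : M.IsRangeProjectionOf π (x * (π - x))) :
    m (pMat x v π) + m (pMat (π - x) (-v) π) = m (diagMat π π) := by
  
  classical
  obtain ⟨hπM, hππ, hπstar⟩ := hπ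
  obtain ⟨hvM, hwv, hvw⟩ := hv
  have hxsa : IsSelfAdjoint x := .of_nonneg hx0
  have hwM : star v ∈ M := star_mem hvM
  -- basic order facts
  have h1π : (0 : H →L[ℂ] H) ≤ 1 - π := by
    have h := star_mul_self_nonneg (1 - π)
    have he : star (1 - π) * (1 - π) = 1 - π := by
      rw [star_sub, star_one, hπstar]
      calc (1 - π) * (1 - π) = 1 - π - π + π * π := by noncomm_ring
        _ = 1 - π := by rw [hππ]; abel
    rwa [he] at h
  have hπ1 : π ≤ 1 := sub_nonneg.mp h1π
  have hx1 : x ≤ 1 := hxπ.trans hπ1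
  set t := CFC.sqrt x with htdef
  have ht2 : t * t = x := CFC.sqrt_mul_sqrt_self x hx0
  have htsa : star t = t := (IsSelfAdjoint.of_nonneg (CFC.sqrt_nonneg _)).star_eq
  -- x * π = x
  have hxπ' : x * π = x := by
    have hconj0 : (1 - π) * x * (1 - π) = 0 := by
      have hub := star_left_conjugate_le_conjugate hxπ (1 - π)
      rw [star_sub, star_one, hπstar] at hub
      have hππ0 : (1 - π) * π * (1 - π) = 0 := by
        calc (1 - π) * π * (1 - π) = (π - π * π) * (1 - π) := by noncomm_ring
          _ = 0 := by rw [hππ, sub_self, zero_mul]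
      have hlb := star_left_conjugate_nonneg hx0 (1 - π)
      rw [star_sub, star_one, hπstar] at hlb
      exact le_antisymm (hππ0 ▸ hub) hlb
    have hu : t * (1 - π) = 0 := by
      rw [← CStarRing.star_mul_self_eq_zero_iff]
      calc star (t * (1 - π)) * (t * (1 - π))
          = (1 - π) * (t * t) * (1 - π) := by
            rw [star_mul, star_sub, star_one, hπstar, htsa]; noncomm_ring
        _ = (1 - π) * x * (1 - π) := by rw [ht2]
        _ = 0 := hconj0
    have hx1π : x * (1 - π) = 0 := by
      calc x * (1 - π) = t * (t * (1 - π)) := by rw [← mul_assoc, ht2]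
        _ = 0 := by rw [hu, mul_zero]
    rw [mul_sub, mul_one, sub_eq_zero] at hx1π
    exact hx1π.symm
  have hπx : π * x = x := by
    have h := congrArg star hxπ'
    rwa [star_mul, hπstar, hxsa.star_eq] at h
  have ha_eq : x * (π - x) = x - x * x := by rw [mul_sub, hxπ']
  have htx : t * x = x * t := by rw [← ht2, ← mul_assoc]
  have ha_pos : (0 : H →L[ℂ] H) ≤ x * (π - x) := by
    rw [ha_eq]
    have h1x : (0 : H →L[ℂ] H) ≤ 1 - x := sub_nonneg.mpr hx1
    have hc := star_left_conjugate_nonneg h1x t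
    have key : star t * (1 - x) * t = x - x * x := by
      rw [htsa]
      calc t * (1 - x) * t = t * t - t * x * t := by noncomm_ring
        _ = t * t - x * (t * t) := by rw [htx, mul_assoc]
        _ = x - x * x := by rw [ht2]
    rwa [key] at hc
  have haM' : x * (π - x) ∈ M := mul_mem hxM (sub_mem hπM hxM)
  haveI : IsStarNormal (x * (π - x)) := (IsSelfAdjoint.of_nonneg ha_pos).isStarNormal
  set s := CFC.sqrt (x * (π - x)) with hsdef
  have hsM : s ∈ M := sqrt_mem' M haM' ha_pos (fun g => cfc_complex_mem' M haM' g)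
  have hs2 : s * s = x - x * x := by rw [hsdef, CFC.sqrt_mul_sqrt_self _ ha_pos, ha_eq]
  have hs0 : (0 : H →L[ℂ] H) ≤ s := CFC.sqrt_nonneg _
  have hssa : star s = s := (IsSelfAdjoint.of_nonneg hs0).star_eq
  have hπxx : π * (x - x * x) = x - x * x := by rw [mul_sub, ← mul_assoc, hπx]
  have hsπ : s * π = s := by
    have hu : s * (1 - π) = 0 := by
      rw [← CStarRing.star_mul_self_eq_zero_iff]
      calc star (s * (1 - π)) * (s * (1 - π))
          = (1 - π) * (s * s) * (1 - π) := by
            rw [star_mul, star_sub, star_one, hπstar, hssa]; noncomm_ring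
        _ = ((x - x * x) - π * (x - x * x)) * (1 - π) := by rw [hs2]; noncomm_ring
        _ = 0 := by rw [hπxx, sub_self, zero_mul]
    rw [mul_sub, mul_one, sub_eq_zero] at hu
    exact hu.symm
  -- the commutative subalgebra
  letI : CommRing ↥(M.toStarSubalgebra) :=
    { (inferInstance : Ring ↥(M.toStarSubalgebra)) with
      mul_comm := fun a b => Subtype.ext (hcomm a a.2 b b.2) }
  let X : ↥(M.toStarSubalgebra) := ⟨x, hxM⟩
  let Pi : ↥(M.toStarSubalgebra) := ⟨π, hπM⟩
  let S : ↥(M.toStarSubalgebra) := ⟨s, hsM⟩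
  let V : ↥(M.toStarSubalgebra) := ⟨v, hvM⟩
  let W : ↥(M.toStarSubalgebra) := ⟨star v, hwM⟩
  have rXP : X * Pi = X := Subtype.ext hxπ'
  have rP2 : Pi * Pi = Pi := Subtype.ext hππ
  have rSP : S * Pi = S := Subtype.ext hsπ
  have rS2 : S * S = X - X * X := Subtype.ext hs2
  have rVW : V * W = 1 := Subtype.ext hvw
  -- operator identities
  have I1 : x * x + v * s * (star v * s) = x :=
    congrArg Subtype.val (show X*X + V*S*(W*S) = X by linear_combination S*S*rVW + rS2)
  have I2 : x * (v * s) + v * s * (π - x) = v * s :=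
    congrArg Subtype.val (show X*(V*S) + V*S*(Pi-X) = V*S by linear_combination V*rSP)
  have I3 : star v * s * x + (π - x) * (star v * s) = star v * s :=
    congrArg Subtype.val (show W*S*X + (Pi-X)*(W*S) = W*S by linear_combination W*rSP)
  have I4 : star v * s * (v * s) + (π - x) * (π - x) = π - x :=
    congrArg Subtype.val (show W*S*(V*S) + (Pi-X)*(Pi-X) = Pi-X by
      linear_combination S*S*rVW + rS2 + rP2 - 2*rXP)
  have J1 : (π - x) * (π - x) + -(v * s) * -(star v * s) = π - x :=
    congrArg Subtype.val (show (Pi-X)*(Pi-X) + -(V*S) * -(W*S) = Pi-X by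
      linear_combination S*S*rVW + rS2 + rP2 - 2*rXP)
  have J2 : (π - x) * -(v * s) + -(v * s) * x = -(v * s) :=
    congrArg Subtype.val (show (Pi-X) * -(V*S) + -(V*S)*X = -(V*S) by
      linear_combination (-V)*rSP)
  have J3 : -(star v * s) * (π - x) + x * -(star v * s) = -(star v * s) :=
    congrArg Subtype.val (show -(W*S)*(Pi-X) + X * -(W*S) = -(W*S) by
      linear_combination (-W)*rSP)
  have J4 : -(star v * s) * -(v * s) + x * x = x :=
    congrArg Subtype.val (show -(W*S) * -(V*S) + X*X = X by linear_combination S*S*rVW + rS2)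
  have K1 : x * (π - x) + v * s * -(star v * s) = 0 :=
    congrArg Subtype.val (show X*(Pi-X) + V*S * -(W*S) = 0 by
      linear_combination rXP - S*S*rVW - rS2)
  have K2 : x * -(v * s) + v * s * x = 0 :=
    congrArg Subtype.val (show X * -(V*S) + V*S*X = 0 by ring)
  have K3 : star v * s * (π - x) + (π - x) * -(star v * s) = 0 :=
    congrArg Subtype.val (show W*S*(Pi-X) + (Pi-X) * -(W*S) = 0 by ring)
  have K4 : star v * s * -(v * s) + (π - x) * x = 0 :=
    congrArg Subtype.val (show W*S * -(V*S) + (Pi-X)*X = 0 by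
      linear_combination rXP - S*S*rVW - rS2)
  have L1 : (π - x) * x + -(v * s) * (star v * s) = 0 :=
    congrArg Subtype.val (show (Pi-X)*X + -(V*S)*(W*S) = 0 by
      linear_combination rXP - S*S*rVW - rS2)
  have L2 : (π - x) * (v * s) + -(v * s) * (π - x) = 0 :=
    congrArg Subtype.val (show (Pi-X)*(V*S) + -(V*S)*(Pi-X) = 0 by ring)
  have L3 : -(star v * s) * x + x * (star v * s) = 0 :=
    congrArg Subtype.val (show -(W*S)*X + X*(W*S) = 0 by ring)
  have L4 : -(star v * s) * (v * s) + x * (π - x) = 0 :=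
    congrArg Subtype.val (show -(W*S)*(V*S) + X*(Pi-X) = 0 by
      linear_combination rXP - S*S*rVW - rS2)
  have hsv : s * v = v * s :=
    congrArg Subtype.val (show S * V = V * S by ring)
  have hsw : s * star v = star v * s :=
    congrArg Subtype.val (show S * W = W * S by ring)
  -- explicit forms of the matrices
  have hp0eq : pMat x v π = !![x, v * s; star v * s, π - x] := by
    simp only [pMat, ← hsdef]
  have hp1eq : pMat (π - x) (-v) π = !![π - x, -(v * s); -(star v * s), x] := by
    have h1 : π - (π - x) = x := sub_sub_cancel π x
    have h2 : (π - x) * x = x * (π - x) := by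
      rw [sub_mul, hπx, ha_eq]
    simp only [pMat, h1, h2, ← hsdef, star_neg, neg_mul]
  -- the three matrices are projections
  have hp0 : IsProjectionInN M (pMat x v π) := by
    rw [hp0eq]
    refine ⟨?_, ?_, ?_⟩
    · intro i j
      fin_cases i <;> fin_cases j <;> simp only [Matrix.cons_val', Matrix.cons_val_zero,
        Matrix.cons_val_one, Matrix.head_cons, Matrix.empty_val', Matrix.cons_val_fin_one,
        Matrix.head_fin_const]
      exacts [hxM, mul_mem hvM hsM, mul_mem hwM hsM, sub_mem hπM hxM]
    · rw [Matrix.mul_fin_two, I1, I2, I3, I4]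
    · ext i j
      fin_cases i <;> fin_cases j <;>
        simp [Matrix.star_apply, hxsa.star_eq, hπstar, star_mul, hssa, hsw, hsv]
  have hp1 : IsProjectionInN M (pMat (π - x) (-v) π) := by
    rw [hp1eq]
    refine ⟨?_, ?_, ?_⟩
    · intro i j
      fin_cases i <;> fin_cases j <;> simp only [Matrix.cons_val', Matrix.cons_val_zero,
        Matrix.cons_val_one, Matrix.head_cons, Matrix.empty_val', Matrix.cons_val_fin_one,
        Matrix.head_fin_const]
      exacts [sub_mem hπM hxM, neg_mem (mul_mem hvM hsM), neg_mem (mul_mem hwM hsM), hxM]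
    · rw [Matrix.mul_fin_two, J1, J2, J3, J4]
    · ext i j
      fin_cases i <;> fin_cases j <;>
        simp [Matrix.star_apply, hxsa.star_eq, hπstar, star_mul, hssa, hsw, hsv]
  have hq : IsProjectionInN M (diagMat π π) := by
    refine ⟨?_, ?_, ?_⟩
    · intro i j
      fin_cases i <;> fin_cases j <;> simp only [diagMat, Matrix.cons_val', Matrix.cons_val_zero,
        Matrix.cons_val_one, Matrix.head_cons, Matrix.empty_val', Matrix.cons_val_fin_one,
        Matrix.head_fin_const]
      exacts [hπM, zero_mem _, zero_mem _, hπM]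
    · rw [diagMat, Matrix.mul_fin_two]
      simp [hππ]
    · ext i j
      fin_cases i <;> fin_cases j <;> simp [diagMat, Matrix.star_apply, hπstar]
  -- orthogonality
  have horth01 : pMat x v π * pMat (π - x) (-v) π = 0 := by
    rw [hp0eq, hp1eq, Matrix.mul_fin_two, K1, K2, K3, K4]
    ext i j; fin_cases i <;> fin_cases j <;> simp
  have horth10 : pMat (π - x) (-v) π * pMat x v π = 0 := by
    rw [hp0eq, hp1eq, Matrix.mul_fin_two, L1, L2, L3, L4]
    ext i j; fin_cases i <;> fin_cases j <;> simp
  -- the sum is the diagonal projection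
  have hsum : pMat x v π + pMat (π - x) (-v) π = diagMat π π := by
    rw [hp0eq, hp1eq]
    ext i j
    fin_cases i <;> fin_cases j <;> simp [diagMat] <;> abel
  -- apply the measure axiom
  set P : ULift.{u} (Fin 2) → Matrix (Fin 2) (Fin 2) (H →L[ℂ] H) :=
    fun i => ![pMat x v π, pMat (π - x) (-v) π] i.down with hPdef
  have hP0 : P ⟨0⟩ = pMat x v π := rfl
  have hP1 : P ⟨1⟩ = pMat (π - x) (-v) π := rfl
  have hPproj : ∀ i, IsProjectionInN M (P i) := by
    rintro ⟨i⟩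
    fin_cases i
    · exact hp0
    · exact hp1
  have hPorth : ∀ i j, i ≠ j → P i * P j = 0 := by
    rintro ⟨i⟩ ⟨j⟩ hij
    fin_cases i <;> fin_cases j
    · exact absurd rfl hij
    · exact horth01
    · exact horth10
    · exact absurd rfl hij
  have hPsum : ∑ i, P i = diagMat π π := by
    rw [ulift_fin_two_sum P, hP0, hP1, hsum]
  have htend : ∀ a b : Fin 2,
      Tendsto (fun u : Finset (ULift.{u} (Fin 2)) =>
          ContinuousLinearMapWOT.ofCLM ((∑ i ∈ u, P i) a b))
        atTop (nhds (ContinuousLinearMapWOT.ofCLM ((diagMat π π) a b))) := by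
    intro a b
    refine Tendsto.congr' ?_ tendsto_const_nhds
    filter_upwards [eventually_ge_atTop (Finset.univ : Finset (ULift.{u} (Fin 2)))] with u hu
    have hu' : u = Finset.univ := Finset.univ_subset_iff.mp hu
    rw [hu']
    rw [show (∑ i ∈ Finset.univ, P i) = diagMat π π from hPsum]
  have hHasSum := hm.2 P (diagMat π π) hPproj hq hPorth htend
  have htot := (hasSum_fintype fun i => m (P i)).unique hHasSum
  rw [ulift_fin_two_sum (fun i => m (P i)), hP0, hP1] at htot
  exact htot
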